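/- Let Γ be a countable discrete group and N ⊴ Γ a finite normal subgroup. If Γ/N has the Haagerup property, then Γ has the Haagerup property. -/

import Mathlib

/-- A unitary representation of a group `G` on a complex Hilbert space. -/
structure UnitaryRep (G : Type) [Group G] where
  space : Type
  [nacg : NormedAddCommGroup space]
  [ips : InnerProductSpace ℂ space]
  [cs : CompleteSpace space]
  π : G →* (space ≃ₗᵢ[ℂ] space)

attribute [instance] UnitaryRep.nacg UnitaryRep.ips UnitaryRep.cs

/-- The representation is `c₀`: all matrix coefficients vanish at infinity, i.e. for
every `ε > 0` only finitely many group elements have `|⟨π(g)ξ, η⟩| ≥ ε`. -/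
def UnitaryRep.IsC0 {G : Type} [Group G] (R : UnitaryRep G) : Prop :=
  ∀ ξ η : R.space, ∀ ε : ℝ, 0 < ε →
    {g : G | ε ≤ ‖(inner ℂ ((R.π g) ξ) η : ℂ)‖}.Finite

/-- The representation has almost invariant vectors: for every finite `F ⊆ G` and
`ε > 0` there is a unit vector `ξ` with `‖π(g)ξ - ξ‖ ≤ ε` for all `g ∈ F`. -/
def UnitaryRep.HasAlmostInvariantVectors {G : Type} [Group G] (R : UnitaryRep G) : Prop :=
  ∀ (F : Finset G) (ε : ℝ), 0 < ε →
    ∃ ξ : R.space, ‖ξ‖ = 1 ∧ ∀ g ∈ F, ‖(R.π g) ξ - ξ‖ ≤ ε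

/-- A countable discrete group has the Haagerup property if it admits a `c₀` unitary
representation with almost invariant vectors. -/
def HasHaagerupProperty (G : Type) [Group G] [Countable G] : Prop :=
  ∃ R : UnitaryRep G, R.IsC0 ∧ R.HasAlmostInvariantVectors


/-- If `Γ` is a countable discrete group, `N ⊴ Γ` a finite normal subgroup, and the
quotient `Γ/N` has the Haagerup property, then `Γ` has the Haagerup property. -/
theorem haagerup_of_quotient_by_finite_normal {Γ : Type} [Group Γ] [Countable Γ]
    (N : Subgroup Γ) [N.Normal] [Finite N] [Countable (Γ ⧸ N)]
    (h : HasHaagerupProperty (Γ ⧸ N)) :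
    HasHaagerupProperty Γ := by
  obtain ⟨R, hC0, hAIV⟩ := h
  refine ⟨⟨R.space, R.π.comp (QuotientGroup.mk' N)⟩, ?_, ?_⟩
  · intro ξ η ε hε
    have hS := hC0 ξ η ε hε
    have hfib : ∀ q : Γ ⧸ N, ((QuotientGroup.mk : Γ → Γ ⧸ N) ⁻¹' {q}).Finite := by
      intro q
      obtain ⟨g₀, rfl⟩ := QuotientGroup.mk_surjective q
      have : (QuotientGroup.mk : Γ → Γ ⧸ N) ⁻¹' {(g₀ : Γ ⧸ N)}
          = (fun n => g₀ * n) '' (N : Set Γ) := by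
        ext g
        simp only [Set.mem_preimage, Set.mem_singleton_iff, Set.mem_image]
        constructor
        · intro hg
          exact ⟨g₀⁻¹ * g, (QuotientGroup.eq).mp hg.symm, by group⟩
        · rintro ⟨n, hn, rfl⟩
          exact ((QuotientGroup.eq).mpr (by simpa using hn)).symm
      rw [this]
      exact ((N : Set Γ).toFinite).image _
    have : {g : Γ | ε ≤ ‖(inner ℂ ((R.π (QuotientGroup.mk g)) ξ) η : ℂ)‖}
        = (QuotientGroup.mk : Γ → Γ ⧸ N) ⁻¹'
          {q : Γ ⧸ N | ε ≤ ‖(inner ℂ ((R.π q) ξ) η : ℂ)‖} := rfl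
    show ({g : Γ | ε ≤ ‖(inner ℂ ((R.π (QuotientGroup.mk g)) ξ) η : ℂ)‖}).Finite
    rw [this, ← Set.biUnion_preimage_singleton]
    exact hS.biUnion fun q _ => hfib q
  · classical
    intro F ε hε
    obtain ⟨ξ, hξ, hF⟩ := hAIV (F.image (QuotientGroup.mk : Γ → Γ ⧸ N)) ε hε
    exact ⟨ξ, hξ, fun g hg => hF _ (Finset.mem_image_of_mem _ hg)⟩
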